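/- Let J ≥ 1 be an integer and δ > 0. Let f, g : ℝ → ℝ be differentiable functions such that f′(x) ≥ 0 and g′(x) ≥ f′(x) + δ for all x ≥ 1, and g(1) ≥ f(1). For each natural number K ≥ 1, define h(K) = ∑ (k₁,…,k_J) ∈ M_K of (∑_{j=1}^J 2^{f(k_j)}) / (∑_{j=1}^J 2^{g(k_j)}), where M_K = {(k₁,…,k_J) : each k_j is a positive integer and max_j 2^{k_j} ≥ 2^K} and the sum is taken in the extended nonnegative reals. Then h(K) → 0 as K → ∞. -/

import Mathlib

open Filter Finset
open scoped ENNReal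

/-! With `M = max_j k_j ≥ K`, monotonicity of `f` bounds the numerator by `J 2^{f(M)}`, the
denominator is at least `2^{g(M)}`, and `g - f` grows at rate `δ`, so each term is at most
`J 2^δ 2^{-δM}`. Since `2JM ≥ JK + ∑ k_j`, this is at most `J 2^δ (r^J)^K ∏_j r^{k_j}` with
`r = 2^{-δ/(2J)} < 1`; summing the product over all tuples gives `(1 - r)^{-J}`, so the tail sums
decay geometrically in `K`. -/

lemma add_mul_sub_le_of_deriv_add_le {f g : ℝ → ℝ} {a δ : ℝ} (hf : Differentiable ℝ f)
    (hg : Differentiable ℝ g) (hfg : ∀ x, a ≤ x → deriv f x + δ ≤ deriv g x)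
    (ha : f a ≤ g a) {x : ℝ} (hx : a ≤ x) : f x + δ * (x - a) ≤ g x := by
  set φ : ℝ → ℝ := fun y => g y - f y - δ * (y - a)
  have hφ : ∀ y, HasDerivAt φ (deriv g y - deriv f y - δ) y := fun y => by
    have hlin : HasDerivAt (fun y => δ * (y - a)) δ y := by
      simpa using ((hasDerivAt_id y).sub_const a).const_mul δ
    exact ((hg y).hasDerivAt.sub (hf y).hasDerivAt).sub hlin
  have hφ_mono : MonotoneOn φ (Set.Ici a) := by
    refine monotoneOn_of_deriv_nonneg (convex_Ici a)
      (fun y _ => (hφ y).continuousAt.continuousWithinAt)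
      (fun y _ => (hφ y).differentiableAt.differentiableWithinAt) fun y hy => ?_
    rw [interior_Ici] at hy
    rw [(hφ y).deriv]
    linarith [hfg y hy.le]
  have := hφ_mono Set.self_mem_Ici hx hx
  simp only [φ, sub_self, mul_zero, sub_zero] at this
  linarith

lemma sum_two_rpow_div_sum_two_rpow_le {ι : Type*} [Fintype ι] {f g : ℝ → ℝ} {δ : ℝ}
    (hf : MonotoneOn f (Set.Ici 1)) (hfg : ∀ x, 1 ≤ x → f x + δ * (x - 1) ≤ g x)
    {k : ι → ℝ} (hk : ∀ i, 1 ≤ k i) {i₀ : ι} (hi₀ : ∀ i, k i ≤ k i₀) :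
    (∑ i, (2 : ℝ≥0∞) ^ f (k i)) / ∑ i, (2 : ℝ≥0∞) ^ g (k i) ≤
      Fintype.card ι * 2 ^ (-(δ * (k i₀ - 1))) := by
  calc (∑ i, (2 : ℝ≥0∞) ^ f (k i)) / ∑ i, (2 : ℝ≥0∞) ^ g (k i)
      ≤ (Fintype.card ι * 2 ^ f (k i₀)) / 2 ^ g (k i₀) := by
        gcongr ?_ / ?_
        · simpa using sum_le_card_nsmul univ _ _ fun i _ =>
            ENNReal.rpow_le_rpow_of_exponent_le one_le_two (hf (hk i) (hk i₀) (hi₀ i))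
        · exact single_le_sum (f := fun i => (2 : ℝ≥0∞) ^ g (k i)) (fun i _ => zero_le)
            (mem_univ i₀)
    _ = Fintype.card ι * 2 ^ (f (k i₀) - g (k i₀)) := by
        rw [mul_div_assoc, ENNReal.rpow_sub _ _ two_ne_zero ENNReal.ofNat_ne_top]
    _ ≤ Fintype.card ι * 2 ^ (-(δ * (k i₀ - 1))) := by
        gcongr
        · exact one_le_two
        · linarith [hfg _ (hk i₀)]

lemma pow_mul_le_pow_mul_prod_pow {ι M₀ : Type*} [Fintype ι] [CommMonoidWithZero M₀]
    [PartialOrder M₀] [PosMulMono M₀] {r : M₀} (hr₀ : 0 ≤ r) (hr₁ : r ≤ 1) {k : ι → ℕ} {i₀ : ι}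
    (hi₀ : ∀ i, k i ≤ k i₀) {K : ℕ} (hK : K ≤ k i₀) :
    r ^ (2 * Fintype.card ι * k i₀) ≤ (r ^ Fintype.card ι) ^ K * ∏ i, r ^ k i := by
  have hsum : ∑ i, k i ≤ Fintype.card ι * k i₀ := by
    simpa using sum_le_card_nsmul univ k _ fun i _ => hi₀ i
  rw [← pow_mul, prod_pow_eq_pow_sum, ← pow_add]
  refine pow_le_pow_of_le_one hr₀ hr₁ ?_
  nlinarith

lemma two_rpow_neg_mul_eq_pow {δ : ℝ} {n : ℕ} (hn : n ≠ 0) (x : ℕ) :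
    (2 : ℝ≥0∞) ^ (-(δ * x)) = ((2 : ℝ≥0∞) ^ (-(δ / (2 * n)))) ^ (2 * n * x) := by
  rw [← ENNReal.rpow_natCast, ← ENNReal.rpow_mul]
  congr 1
  push_cast
  field_simp

lemma sum_two_rpow_div_sum_two_rpow_le_pow_mul_prod {ι : Type*} [Fintype ι] {f g : ℝ → ℝ}
    {δ : ℝ} (hδ : 0 ≤ δ) (hf : MonotoneOn f (Set.Ici 1))
    (hfg : ∀ x, 1 ≤ x → f x + δ * (x - 1) ≤ g x)
    {k : ι → ℕ} (hk : ∀ i, 1 ≤ k i) {K : ℕ} (hK : ∃ i, K ≤ k i) :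
    (∑ i, (2 : ℝ≥0∞) ^ f (k i)) / ∑ i, (2 : ℝ≥0∞) ^ g (k i) ≤
      Fintype.card ι * 2 ^ δ * ((2 ^ (-(δ / (2 * Fintype.card ι)))) ^ Fintype.card ι) ^ K *
        ∏ i, (2 ^ (-(δ / (2 * Fintype.card ι)))) ^ k i := by
  set r : ℝ≥0∞ := 2 ^ (-(δ / (2 * Fintype.card ι)))
  obtain ⟨i₁, hi₁⟩ := hK
  obtain ⟨i₀, -, hi₀⟩ := exists_max_image univ k ⟨i₁, mem_univ _⟩
  replace hi₀ : ∀ i, k i ≤ k i₀ := fun i => hi₀ i (mem_univ i)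
  have : Nonempty ι := ⟨i₀⟩
  have hr : r ≤ 1 := by
    simpa using ENNReal.rpow_le_rpow_of_exponent_le one_le_two
      (neg_nonpos.2 (by positivity : 0 ≤ δ / (2 * Fintype.card ι)))
  calc _ ≤ Fintype.card ι * (2 : ℝ≥0∞) ^ (-(δ * ((k i₀ : ℝ) - 1))) :=
        sum_two_rpow_div_sum_two_rpow_le hf hfg (fun i => by exact_mod_cast hk i)
          (fun i => by exact_mod_cast hi₀ i)
    _ = Fintype.card ι * 2 ^ δ * r ^ (2 * Fintype.card ι * k i₀) := by
        rw [← two_rpow_neg_mul_eq_pow Fintype.card_ne_zero, mul_assoc,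
          ← ENNReal.rpow_add _ _ two_ne_zero ENNReal.ofNat_ne_top]
        ring_nf
    _ ≤ Fintype.card ι * 2 ^ δ * ((r ^ Fintype.card ι) ^ K * ∏ i, r ^ k i) := by
        gcongr
        exact pow_mul_le_pow_mul_prod_pow zero_le hr hi₀ (hi₁.trans (hi₀ i₁))
    _ = _ := by ring

lemma ENNReal.tsum_pi_prod {β : Type*} (n : ℕ) (a : β → ℝ≥0∞) :
    ∑' k : Fin n → β, ∏ j, a (k j) = (∑' b, a b) ^ n := by
  induction n with
  | zero => simp
  | succ n ih =>
    rw [← (Fin.consEquiv fun _ => β).tsum_eq, ENNReal.tsum_prod', pow_succ', ← ih,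
      ← ENNReal.tsum_mul_right]
    simp [Fin.prod_univ_succ, ENNReal.tsum_mul_left]

/-- Lemma S3 of the paper: the multi-index tail sums of ratios of powers of two
vanish as `K → ∞`. -/
theorem tail_sum_ratio_tendsto_zero
    (J : ℕ) (hJ : 1 ≤ J) (δ : ℝ) (hδ : 0 < δ)
    (f g : ℝ → ℝ) (hf : Differentiable ℝ f) (hg : Differentiable ℝ g)
    (hf' : ∀ x : ℝ, 1 ≤ x → 0 ≤ deriv f x)
    (hg' : ∀ x : ℝ, 1 ≤ x → deriv f x + δ ≤ deriv g x)
    (h1 : f 1 ≤ g 1) :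
    Tendsto
      (fun K : ℕ =>
        ∑' k : Fin J → ℕ,
          if (∀ j, 1 ≤ k j) ∧ (∃ j, (2 : ℝ) ^ (K : ℝ) ≤ (2 : ℝ) ^ (k j : ℝ)) then
            (∑ j, (2 : ℝ≥0∞) ^ (f (k j : ℝ))) / (∑ j, (2 : ℝ≥0∞) ^ (g (k j : ℝ)))
          else 0)
      atTop (nhds 0) := by
  have hf_mono : MonotoneOn f (Set.Ici 1) :=
    monotoneOn_of_deriv_nonneg (convex_Ici 1) hf.continuous.continuousOn hf.differentiableOn
      fun x hx => hf' x (by rw [interior_Ici] at hx; exact hx.le)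
  have hgap : ∀ x, 1 ≤ x → f x + δ * (x - 1) ≤ g x := fun x =>
    add_mul_sub_le_of_deriv_add_le hf hg hg' h1
  set r : ℝ≥0∞ := 2 ^ (-(δ / (2 * J)))
  have hr : r < 1 := ENNReal.rpow_lt_one_of_one_lt_of_neg ENNReal.one_lt_two <|
    neg_neg_of_pos (div_pos hδ (by positivity))
  have hC : (J : ℝ≥0∞) * 2 ^ δ * (1 - r)⁻¹ ^ J ≠ ⊤ := by
    have : (1 - r)⁻¹ ≠ ⊤ := ENNReal.inv_ne_top.2 (tsub_pos_of_lt hr).ne'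
    finiteness
  have hlim :
      Tendsto (fun K : ℕ => J * 2 ^ δ * (1 - r)⁻¹ ^ J * (r ^ J) ^ K) atTop (nhds 0) := by
    simpa using ENNReal.Tendsto.const_mul
      (ENNReal.tendsto_pow_atTop_nhds_zero_of_lt_one (pow_lt_one₀ zero_le hr (by omega)))
      (Or.inr hC)
  refine tendsto_of_tendsto_of_tendsto_of_le_of_le tendsto_const_nhds hlim (fun _ => zero_le)
    fun K => ?_
  calc _ ≤ ∑' k : Fin J → ℕ, J * 2 ^ δ * (r ^ J) ^ K * ∏ j, r ^ k j := by
        refine ENNReal.tsum_le_tsum fun k => ?_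
        split_ifs with hk
        · obtain ⟨hk_pos, j, hj⟩ := hk
          have hKj : K ≤ k j := by exact_mod_cast (Real.rpow_le_rpow_left_iff one_lt_two).mp hj
          simpa using
            sum_two_rpow_div_sum_two_rpow_le_pow_mul_prod hδ.le hf_mono hgap hk_pos ⟨j, hKj⟩
        · exact zero_le
    _ = J * 2 ^ δ * (1 - r)⁻¹ ^ J * (r ^ J) ^ K := by
        rw [ENNReal.tsum_mul_left, ENNReal.tsum_pi_prod, ENNReal.tsum_geometric]
        ring
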